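/- arXiv:1402.3402 — 2 statements merged into one kernel-verified Lean document; each statement's English description precedes it below -/
import Mathlib

section
/- Let A, A_1, …, A_M be real n×n matrices and B a real n×m matrix. On a probability space, let (σ_k(i))_{0≤k<N, 1≤i≤M} be real random variables, (w_k)_{0≤k<N} be ℝ^n-valued random vectors, and (u_k)_{0≤k<N}, (v_k)_{0≤k<N} be ℝ^m-valued random vectors, all with finite second moments. Define x'_0 = 0, x''_0 = 0, x'_{k+1} = (A + Σ_{i=1}^M σ_k(i) A_i) x'_k + B u_k + w_k, and x''_{k+1} = (A + Σ_{i=1}^M σ_k(i) A_i) x''_k + B v_k. Assume that for every k, the random vector v_k has mean zero and is independent of the joint family of random variables (σ_l(i), w_l, u_l : 0 ≤ l < N, 1 ≤ i ≤ M), and that the v_k have finite second moments. Then for every k ≤ N, E[x''_k (x'_k)ᵀ] = 0 and, for every k < N, E[u_k (x''_k)ᵀ] = 0. -/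
/-!
Let `Z = (σ, w, u)` be the joint noise. Unrolling the recursions, `x'_k` is a continuous
function of `Z`, and `x''_k = ∑_{l<k} Φ_l(Z) v_l` is linear in the `v_l` with coefficients
continuous in `Z`. Hence every entry of `E[x''_k x'_kᵀ]` and of `E[u_k x''_kᵀ]` is the expectation
of a finite sum of terms `f(Z) · v_l(j)`, and each such term has expectation
`E[f(Z)] · E[v_l(j)] = 0` because `v_l` is centred and independent of `Z`.
-/

open MeasureTheory Matrix

/-- `E[a bᵀ]`: the `d × e` matrix of second moments of two random vectors. -/
noncomputable def crossMoment {Ω : Type*} [MeasurableSpace Ω] (μ : Measure Ω)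
    {d e : ℕ} (a : Ω → Fin d → ℝ) (b : Ω → Fin e → ℝ) : Matrix (Fin d) (Fin e) ℝ :=
  Matrix.of fun i j => ∫ ω, a ω i * b ω j ∂μ

open Filter ProbabilityTheory Finset

section Independence

variable {Ω E : Type*} [MeasurableSpace Ω] [MeasurableSpace E] {μ : Measure Ω} {Z : Ω → E}

theorem integral_comp_mul_eq_zero_of_indepFun (hZ : AEMeasurable Z μ) {f : E → ℝ}
    (hf : Measurable f) {g : Ω → ℝ} (hg : AEStronglyMeasurable g μ) (hg0 : ∫ ω, g ω ∂μ = 0)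
    (hind : IndepFun g Z μ) : ∫ ω, f (Z ω) * g ω ∂μ = 0 := by
  have h := (hind.symm.comp hf measurable_id).integral_mul_eq_mul_integral
    (hf.comp_aemeasurable hZ).aestronglyMeasurable hg
  simpa [hg0] using h

theorem integral_sum_comp_mul_eq_zero_of_indepFun {ι : Type*} (s : Finset ι)
    (hZ : AEMeasurable Z μ) {f : ι → E → ℝ} (hf : ∀ t ∈ s, Measurable (f t))
    {g : ι → Ω → ℝ} (hg : ∀ t ∈ s, Integrable (g t) μ) (hg0 : ∀ t ∈ s, ∫ ω, g t ω ∂μ = 0)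
    (hind : ∀ t ∈ s, IndepFun (g t) Z μ) :
    ∫ ω, ∑ t ∈ s, f t (Z ω) * g t ω ∂μ = 0 := by
  set Y := fun ω => ∑ t ∈ s, f t (Z ω) * g t ω
  by_cases hY : Integrable Y μ
  swap
  · exact integral_undef hY
  -- The coefficients `f t (Z ω)` need not be integrable: truncate to `{∑ t ∈ s, |f t (Z ω)| ≤ R}`.
  set S : ℕ → Set E := fun R => {e | ∑ t ∈ s, |f t e| ≤ R}
  have hS : ∀ R, MeasurableSet (S R) := fun R =>
    measurableSet_le (Finset.measurable_sum _ fun t ht => (hf t ht).abs) measurable_const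
  have hmono : Monotone fun R => Z ⁻¹' S R := fun R R' h ω hω =>
    le_trans (b := (R : ℝ)) hω (Nat.cast_le.2 h)
  have hunion : ⋃ R, Z ⁻¹' S R = Set.univ :=
    Set.eq_univ_of_forall fun ω => Set.mem_iUnion.2 (exists_nat_ge (∑ t ∈ s, |f t (Z ω)|))
  have hlim := tendsto_setIntegral_of_monotone₀ (f := Y)
    (fun R => hZ.nullMeasurableSet_preimage (hS R)) hmono (by rwa [hunion, integrableOn_univ])
  rw [hunion, setIntegral_univ] at hlim
  refine tendsto_nhds_unique hlim (tendsto_const_nhds.congr fun R => ?_)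
  have hbound : ∀ t ∈ s, ∀ e, ‖(S R).indicator (f t) e‖ ≤ R := by
    intro t ht e
    by_cases he : e ∈ S R
    · rw [Set.indicator_of_mem he, Real.norm_eq_abs]
      exact (Finset.single_le_sum (fun t _ => abs_nonneg (f t e)) ht).trans he
    · rw [Set.indicator_of_notMem he, norm_zero]
      positivity
  have htrunc : (Z ⁻¹' S R).indicator Y =
      fun ω => ∑ t ∈ s, (S R).indicator (f t) (Z ω) * g t ω := by
    ext ω
    by_cases hω : Z ω ∈ S R <;> simp [Y, hω]
  have hint : ∀ t ∈ s, Integrable (fun ω => (S R).indicator (f t) (Z ω) * g t ω) μ :=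
    fun t ht => (hg t ht).bdd_mul
      (((hf t ht).indicator (hS R)).comp_aemeasurable hZ).aestronglyMeasurable
      (Eventually.of_forall fun ω => hbound t ht (Z ω))
  rw [← integral_indicator₀ (hZ.nullMeasurableSet_preimage (hS R)), htrunc,
    integral_finsetSum s hint]
  exact (Finset.sum_eq_zero fun t ht => integral_comp_mul_eq_zero_of_indepFun hZ
    ((hf t ht).indicator (hS R)) (hg t ht).1 (hg0 t ht) (hind t ht)).symm

theorem crossMoment_comp_sum_mulVec_eq_zero {d p q : ℕ} {ι : Type*} (s : Finset ι)
    (hZ : AEMeasurable Z μ) {ψ : E → Fin d → ℝ} (hψ : Measurable ψ)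
    {Φ : ι → E → Matrix (Fin p) (Fin q) ℝ} (hΦ : ∀ l ∈ s, ∀ i j, Measurable fun e => Φ l e i j)
    {v : ι → Ω → Fin q → ℝ} (hv : ∀ l ∈ s, Integrable (v l) μ)
    (hv0 : ∀ l ∈ s, ∫ ω, v l ω ∂μ = 0) (hind : ∀ l ∈ s, IndepFun (v l) Z μ) :
    crossMoment μ (fun ω => ψ (Z ω)) (fun ω => ∑ l ∈ s, Φ l (Z ω) *ᵥ v l ω) = 0 := by
  have hs : ∀ t ∈ s ×ˢ (univ : Finset (Fin q)), t.1 ∈ s := fun _ ht => (mem_product.1 ht).1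
  ext i j
  have hexpand : ∀ ω, ψ (Z ω) i * (∑ l ∈ s, Φ l (Z ω) *ᵥ v l ω) j =
      ∑ t ∈ s ×ˢ univ, (ψ (Z ω) i * Φ t.1 (Z ω) j t.2) * v t.1 ω t.2 := by
    intro ω
    simp only [sum_product, Finset.sum_apply, mulVec, dotProduct, mul_sum, mul_assoc]
  simp only [crossMoment, of_apply, Matrix.zero_apply, hexpand]
  refine integral_sum_comp_mul_eq_zero_of_indepFun (s ×ˢ univ) hZ
    (fun t ht => ((measurable_pi_apply i).comp hψ).mul (hΦ t.1 (hs t ht) j t.2))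
    (fun t ht => (hv t.1 (hs t ht)).eval t.2) (fun t ht => ?_)
    (fun t ht => (hind t.1 (hs t ht)).comp (measurable_pi_apply t.2) measurable_id)
  rw [← eval_integral (hv t.1 (hs t ht)).eval, hv0 t.1 (hs t ht), Pi.zero_apply]

theorem crossMoment_transpose {d e : ℕ} (a : Ω → Fin d → ℝ) (b : Ω → Fin e → ℝ) :
    (crossMoment μ a b)ᵀ = crossMoment μ b a := by
  ext i j
  simp only [crossMoment, transpose_apply, of_apply, mul_comm]

end Independence

section Recursion

variable {Ω E : Type*} [TopologicalSpace E] {N : ℕ} (Z : Ω → E)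

theorem exists_continuous_comp_of_recursion {β : Type*} [TopologicalSpace β]
    {F : Fin N → E → β → β} (hF : ∀ k, Continuous (Function.uncurry (F k)))
    {x : ℕ → Ω → β} {x₀ : β} (hx0 : x 0 = fun _ => x₀)
    (hx : ∀ k : Fin N, ∀ ω, x (k + 1) ω = F k (Z ω) (x k ω)) :
    ∀ k ≤ N, ∃ ξ : E → β, Continuous ξ ∧ x k = fun ω => ξ (Z ω) := by
  intro k
  induction k with
  | zero => exact fun _ => ⟨fun _ => x₀, continuous_const, hx0⟩
  | succ k ih =>
    intro hk
    obtain ⟨ξ, hξ, hxk⟩ := ih (k.le_succ.trans hk)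
    refine ⟨fun e => F ⟨k, hk⟩ e (ξ e), (hF _).comp (continuous_id.prodMk hξ), funext fun ω => ?_⟩
    rw [hx ⟨k, hk⟩ ω, hxk]

theorem exists_sum_mulVec_of_linear_recursion {n m : ℕ}
    {G : Fin N → E → Matrix (Fin n) (Fin n) ℝ} {H : Fin N → E → Matrix (Fin n) (Fin m) ℝ}
    (hG : ∀ k, Continuous (G k)) (hH : ∀ k, Continuous (H k))
    {v : ℕ → Ω → Fin m → ℝ} {y : ℕ → Ω → Fin n → ℝ} (hy0 : y 0 = 0)
    (hy : ∀ k : Fin N, ∀ ω, y (k + 1) ω = G k (Z ω) *ᵥ y k ω + H k (Z ω) *ᵥ v k ω) :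
    ∀ k ≤ N, ∃ Φ : ℕ → E → Matrix (Fin n) (Fin m) ℝ,
      (∀ l, Continuous (Φ l)) ∧ y k = fun ω => ∑ l ∈ range k, Φ l (Z ω) *ᵥ v l ω := by
  intro k
  induction k with
  | zero => exact fun _ => ⟨fun _ _ => 0, fun _ => continuous_const, funext fun _ => by simp [hy0]⟩
  | succ k ih =>
    intro hk
    obtain ⟨Φ, hΦ, hyk⟩ := ih (k.le_succ.trans hk)
    refine ⟨Function.update (fun l e => G ⟨k, hk⟩ e * Φ l e) k (H ⟨k, hk⟩), fun l => ?_,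
      funext fun ω => ?_⟩
    · by_cases hl : l = k
      · simpa [hl] using hH _
      · simpa [hl] using (hG _).matrix_mul (hΦ l)
    · rw [hy ⟨k, hk⟩ ω, hyk, sum_range_succ, mulVec_sum, Function.update_self]
      congr 1
      refine sum_congr rfl fun l hl => ?_
      rw [Function.update_of_ne (mem_range.1 hl).ne, mulVec_mulVec]

end Recursion

theorem decomposition_uncorrelated
    {Ω : Type*} [MeasurableSpace Ω] (μ : Measure Ω) [IsProbabilityMeasure μ]
    {n m M N : ℕ}
    (A : Matrix (Fin n) (Fin n) ℝ) (Ai : Fin M → Matrix (Fin n) (Fin n) ℝ)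
    (B : Matrix (Fin n) (Fin m) ℝ)
    (σ : ℕ → Fin M → Ω → ℝ) (w : ℕ → Ω → Fin n → ℝ)
    (u v : ℕ → Ω → Fin m → ℝ)
    (x' x'' : ℕ → Ω → Fin n → ℝ)
    (hσ : ∀ k < N, ∀ i, MemLp (σ k i) 2 μ)
    (hw : ∀ k < N, MemLp (w k) 2 μ)
    (hu : ∀ k < N, MemLp (u k) 2 μ)
    (hv : ∀ k < N, MemLp (v k) 2 μ)
    (hx'0 : x' 0 = 0) (hx''0 : x'' 0 = 0)
    (hx' : ∀ k < N, ∀ ω, x' (k + 1) ω =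
      (A + ∑ i, σ k i ω • Ai i).mulVec (x' k ω) + B.mulVec (u k ω) + w k ω)
    (hx'' : ∀ k < N, ∀ ω, x'' (k + 1) ω =
      (A + ∑ i, σ k i ω • Ai i).mulVec (x'' k ω) + B.mulVec (v k ω))
    (hvmean : ∀ k < N, ∫ ω, v k ω ∂μ = 0)
    (hvindep : ∀ k < N, ProbabilityTheory.IndepFun (v k)
      (fun ω => (fun (l : Fin N) (i : Fin M) => σ l i ω,
                 fun l : Fin N => w l ω,
                 fun l : Fin N => u l ω)) μ) :
    (∀ k ≤ N, crossMoment μ (x'' k) (x' k) = 0) ∧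
    (∀ k < N, crossMoment μ (u k) (x'' k) = 0) := by
  set Z := fun ω => (fun (l : Fin N) (i : Fin M) => σ l i ω,
    fun l : Fin N => w l ω, fun l : Fin N => u l ω)
  have hZ : AEMeasurable Z μ :=
    (aemeasurable_pi_lambda _ fun l : Fin N => aemeasurable_pi_lambda _ fun i =>
      (hσ l l.2 i).aemeasurable).prodMk
    ((aemeasurable_pi_lambda _ fun l : Fin N => (hw l l.2).aemeasurable).prodMk
      (aemeasurable_pi_lambda _ fun l : Fin N => (hu l l.2).aemeasurable))
  have hx'rep := exists_continuous_comp_of_recursion Z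
    (F := fun k e x => (A + ∑ i, e.1 k i • Ai i) *ᵥ x + B *ᵥ e.2.2 k + e.2.1 k)
    (fun _ => by fun_prop) hx'0 fun k => hx' k k.2
  have hx''rep := exists_sum_mulVec_of_linear_recursion Z
    (G := fun k e => A + ∑ i, e.1 k i • Ai i) (H := fun _ _ => B)
    (fun _ => by fun_prop) (fun _ => continuous_const) hx''0 fun k => hx'' k k.2
  have hcross : ∀ k ≤ N, ∀ {d} (ψ : _ → Fin d → ℝ), Measurable ψ →
      crossMoment μ (fun ω => ψ (Z ω)) (x'' k) = 0 := by
    intro k hk d ψ hψ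
    obtain ⟨Φ, hΦ, hx''k⟩ := hx''rep k hk
    have hlt : ∀ l ∈ range k, l < N := fun l hl => (mem_range.1 hl).trans_le hk
    rw [hx''k]
    exact crossMoment_comp_sum_mulVec_eq_zero (range k) hZ hψ
      (fun l _ i j => ((hΦ l).matrix_elem i j).measurable)
      (fun l hl => (hv l (hlt l hl)).integrable one_le_two)
      (fun l hl => hvmean l (hlt l hl)) (fun l hl => hvindep l (hlt l hl))
  refine ⟨fun k hk => ?_, fun k hk => hcross k hk.le (fun e => e.2.2 ⟨k, hk⟩) (by fun_prop)⟩
  obtain ⟨ξ, hξ, hx'k⟩ := hx'rep k hk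
  rw [← crossMoment_transpose, hx'k, hcross k hk ξ hξ.measurable, transpose_zero]
end

section
/- Let A, A_1, …, A_M be real n×n matrices and B a real n×m matrix. Let (V_k)_{0≤k≤N} be positive semidefinite real (n+m)×(n+m) matrices with blocks V_k = [[X_k, R_k],[R_kᵀ, U_k]], where each X_k is invertible, satisfying X_{k+1} = [A B] V_k [A B]ᵀ + Σ_{i=1}^M A_i X_k A_iᵀ + I_n for 0 ≤ k < N. On a probability space, let x_0 be an ℝ^n-valued random vector with E[x_0 x_0ᵀ] = X_0, and define recursively u_k = R_kᵀ X_k⁻¹ x_k + v_k and x_{k+1} = (A + Σ_{i=1}^M σ_k(i) A_i) x_k + B u_k + w_k, where for each k: v_k is an ℝ^m-valued random vector with finite second moments, mean zero, E[v_k x_kᵀ] = 0, and E[v_k v_kᵀ] = U_k − R_kᵀ X_k⁻¹ R_k; w_k is an ℝ^n-valued random vector with finite second moments, E[w_k x_kᵀ] = 0, E[w_k u_kᵀ] = 0, E[w_k w_kᵀ] = I_n; and (σ_k(1),…,σ_k(M)) is a vector of real random variables with finite second moments, independent of (x_k, u_k, w_k), with E[σ_k(i)] = 0 and E[σ_k(i)σ_k(j)]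 = δ(i−j). Then E[(x_k;u_k)(x_k;u_k)ᵀ] = V_k for every 0 ≤ k ≤ N (with U_N interpreted via any u_N constructed in the same way). -/
/-!
Induction on `k`, carrying `x_k ∈ L²` and `E[x_k x_kᵀ] = X_k`. Since `X_k = E[x_k x_kᵀ]` is
symmetric, the feedback `u = Rᵀ X⁻¹ x + v` with `v` uncorrelated with `x` gives
`E[x uᵀ] = X X⁻¹ R = R` and `E[u uᵀ] = Rᵀ X⁻¹ R + (U - Rᵀ X⁻¹ R) = U`, i.e.
`E[(x;u)(x;u)ᵀ] = V_k`. Next, `x_{k+1} = [A B](x;u) + ∑ σᵢ Aᵢ x + w` is a sum of three mutually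
uncorrelated terms: the noise `σ` is independent of `(x, u, w)` and centred, so it is uncorrelated
with anything built from them, and `E[σᵢ σⱼ] = δᵢⱼ` collapses its own second moment to
`∑ Aᵢ X Aᵢᵀ`. Adding the three second moments gives exactly the recursion for `X_{k+1}`.
-/

open MeasureTheory Matrix

/-- Horizontal concatenation `[A B]` of two matrices with the same row index. -/
def hcat {n p q : ℕ} {α : Type*} (A : Matrix (Fin n) (Fin p) α) (B : Matrix (Fin n) (Fin q) α) :
    Matrix (Fin n) (Fin (p + q)) α :=
  Matrix.of fun i => Fin.append (A i) (B i)

/-- Vertical concatenation of two matrices with the same column index. -/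
def vcat {p q n : ℕ} {α : Type*} (A : Matrix (Fin p) (Fin n) α) (B : Matrix (Fin q) (Fin n) α) :
    Matrix (Fin (p + q)) (Fin n) α :=
  Matrix.of (Fin.append A B)


open ProbabilityTheory

section BlockMatrix

variable {α : Type*}

@[simp]
lemma hcat_apply_castAdd {n p q : ℕ} (A : Matrix (Fin n) (Fin p) α) (B : Matrix (Fin n) (Fin q) α)
    (i : Fin n) (j : Fin p) : hcat A B i (Fin.castAdd q j) = A i j := by
  simp [hcat]

@[simp]
lemma hcat_apply_natAdd {n p q : ℕ} (A : Matrix (Fin n) (Fin p) α) (B : Matrix (Fin n) (Fin q) α)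
    (i : Fin n) (j : Fin q) : hcat A B i (Fin.natAdd p j) = B i j := by
  simp [hcat]

@[simp]
lemma vcat_apply_castAdd {p q n : ℕ} (A : Matrix (Fin p) (Fin n) α) (B : Matrix (Fin q) (Fin n) α)
    (i : Fin p) (j : Fin n) : vcat A B (Fin.castAdd q i) j = A i j :=
  congrFun (Fin.append_left (α := Fin n → α) A B i) j

@[simp]
lemma vcat_apply_natAdd {p q n : ℕ} (A : Matrix (Fin p) (Fin n) α) (B : Matrix (Fin q) (Fin n) α)
    (i : Fin q) (j : Fin n) : vcat A B (Fin.natAdd p i) j = B i j :=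
  congrFun (Fin.append_right (α := Fin n → α) A B i) j

@[simp]
lemma hcat_zero_zero [Zero α] {n p q : ℕ} :
    hcat (0 : Matrix (Fin n) (Fin p) α) (0 : Matrix (Fin n) (Fin q) α) = 0 := by
  ext i j
  refine Fin.addCases (fun j => ?_) (fun j => ?_) j <;> simp

lemma hcat_mulVec_finAppend [NonUnitalNonAssocSemiring α] {n p q : ℕ}
    (A : Matrix (Fin n) (Fin p) α) (B : Matrix (Fin n) (Fin q) α) (a : Fin p → α)
    (b : Fin q → α) : hcat A B *ᵥ Fin.append a b = A *ᵥ a + B *ᵥ b := by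
  ext i
  simp [mulVec, dotProduct, Fin.sum_univ_add]

lemma mulVec_add_sum_smul_eq {n m : ℕ} {ι : Type*} [Fintype ι] (A : Matrix (Fin n) (Fin n) ℝ)
    (Ai : ι → Matrix (Fin n) (Fin n) ℝ) (B : Matrix (Fin n) (Fin m) ℝ) (s : ι → ℝ)
    (x w : Fin n → ℝ) (u : Fin m → ℝ) :
    (A + ∑ k, s k • Ai k) *ᵥ x + B *ᵥ u + w
      = hcat A B *ᵥ Fin.append x u + ∑ k, s k • (Ai k *ᵥ x) + w := by
  rw [hcat_mulVec_finAppend, add_mulVec, sum_mulVec]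
  simp only [smul_mulVec]
  abel

end BlockMatrix

namespace MeasureTheory.MemLp

variable {Ω : Type*} [MeasurableSpace Ω] {μ : Measure Ω} {q : ENNReal} {d e : ℕ}

lemma finAppend {a : Ω → Fin d → ℝ} {b : Ω → Fin e → ℝ} (ha : MemLp a q μ) (hb : MemLp b q μ) :
    MemLp (fun ω => Fin.append (a ω) (b ω)) q μ := by
  refine memLp_pi_iff.2 fun i => Fin.addCases (fun i => ?_) (fun i => ?_) i
  · simpa using ha.eval i
  · simpa using hb.eval i

lemma matrix_mulVec {p : ℕ} (C : Matrix (Fin p) (Fin d) ℝ) {a : Ω → Fin d → ℝ}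
    (ha : MemLp a q μ) : MemLp (fun ω => C *ᵥ a ω) q μ :=
  (Matrix.toLin' C).toContinuousLinearMap.comp_memLp' ha

end MeasureTheory.MemLp

section CrossMoment

variable {Ω : Type*} [MeasurableSpace Ω] {μ : Measure Ω} {d e p : ℕ}

lemma transpose_crossMoment (a : Ω → Fin d → ℝ) (b : Ω → Fin e → ℝ) :
    (crossMoment μ a b)ᵀ = crossMoment μ b a := by
  ext i j
  simp [crossMoment, mul_comm]

lemma integrable_mul_apply_of_memLp {a : Ω → Fin d → ℝ} {b : Ω → Fin e → ℝ} (ha : MemLp a 2 μ)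
    (hb : MemLp b 2 μ) (i : Fin d) (j : Fin e) :
    Integrable (fun ω => a ω i * b ω j) μ :=
  (ha.eval i).integrable_mul (hb.eval j)

lemma crossMoment_add_left {a a' : Ω → Fin d → ℝ} {b : Ω → Fin e → ℝ} (ha : MemLp a 2 μ)
    (ha' : MemLp a' 2 μ) (hb : MemLp b 2 μ) :
    crossMoment μ (fun ω => a ω + a' ω) b = crossMoment μ a b + crossMoment μ a' b := by
  ext i j
  simp only [crossMoment, of_apply, Matrix.add_apply, Pi.add_apply, add_mul]
  exact integral_add (integrable_mul_apply_of_memLp ha hb i j)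
    (integrable_mul_apply_of_memLp ha' hb i j)

lemma crossMoment_add_right {a : Ω → Fin d → ℝ} {b b' : Ω → Fin e → ℝ} (ha : MemLp a 2 μ)
    (hb : MemLp b 2 μ) (hb' : MemLp b' 2 μ) :
    crossMoment μ a (fun ω => b ω + b' ω) = crossMoment μ a b + crossMoment μ a b' := by
  rw [← transpose_crossMoment, crossMoment_add_left hb hb' ha, transpose_add,
    transpose_crossMoment, transpose_crossMoment]

lemma crossMoment_sum_left {ι : Type*} (s : Finset ι) {a : ι → Ω → Fin d → ℝ}
    {b : Ω → Fin e → ℝ} (ha : ∀ k ∈ s, MemLp (a k) 2 μ) (hb : MemLp b 2 μ) :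
    crossMoment μ (fun ω => ∑ k ∈ s, a k ω) b = ∑ k ∈ s, crossMoment μ (a k) b := by
  ext i j
  simp only [crossMoment, of_apply, Matrix.sum_apply, Finset.sum_apply, Finset.sum_mul]
  exact integral_finsetSum s fun k hk => integrable_mul_apply_of_memLp (ha k hk) hb i j

lemma crossMoment_sum_right {ι : Type*} (s : Finset ι) {a : Ω → Fin d → ℝ}
    {b : ι → Ω → Fin e → ℝ} (ha : MemLp a 2 μ) (hb : ∀ k ∈ s, MemLp (b k) 2 μ) :
    crossMoment μ a (fun ω => ∑ k ∈ s, b k ω) = ∑ k ∈ s, crossMoment μ a (b k) := by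
  rw [← transpose_crossMoment, crossMoment_sum_left s hb ha, transpose_sum]
  simp only [transpose_crossMoment]

lemma crossMoment_mulVec_left (C : Matrix (Fin p) (Fin d) ℝ) {a : Ω → Fin d → ℝ}
    {b : Ω → Fin e → ℝ} (ha : MemLp a 2 μ) (hb : MemLp b 2 μ) :
    crossMoment μ (fun ω => C *ᵥ a ω) b = C * crossMoment μ a b := by
  ext i j
  simp only [crossMoment, of_apply, mul_apply, mulVec, dotProduct, Finset.sum_mul, mul_assoc]
  rw [integral_finsetSum _ fun k _ => (integrable_mul_apply_of_memLp ha hb k j).const_mul (C i k)]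
  simp only [integral_const_mul]

lemma crossMoment_mulVec_right (C : Matrix (Fin p) (Fin e) ℝ) {a : Ω → Fin d → ℝ}
    {b : Ω → Fin e → ℝ} (ha : MemLp a 2 μ) (hb : MemLp b 2 μ) :
    crossMoment μ a (fun ω => C *ᵥ b ω) = crossMoment μ a b * Cᵀ := by
  rw [← transpose_crossMoment, crossMoment_mulVec_left C hb ha, transpose_mul,
    transpose_crossMoment]

lemma crossMoment_finAppend_left {q : ℕ} (a : Ω → Fin d → ℝ) (a' : Ω → Fin q → ℝ)
    (b : Ω → Fin e → ℝ) :
    crossMoment μ (fun ω => Fin.append (a ω) (a' ω)) b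
      = vcat (crossMoment μ a b) (crossMoment μ a' b) := by
  ext i j
  refine Fin.addCases (fun i => ?_) (fun i => ?_) i <;> simp [crossMoment]

lemma crossMoment_finAppend_right {q : ℕ} (a : Ω → Fin d → ℝ) (b : Ω → Fin e → ℝ)
    (b' : Ω → Fin q → ℝ) :
    crossMoment μ a (fun ω => Fin.append (b ω) (b' ω))
      = hcat (crossMoment μ a b) (crossMoment μ a b') := by
  ext i j
  refine Fin.addCases (fun j => ?_) (fun j => ?_) j <;> simp [crossMoment]

lemma crossMoment_smul_smul (s t : Ω → ℝ) (a : Ω → Fin d → ℝ) (b : Ω → Fin e → ℝ) :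
    crossMoment μ (fun ω => s ω • a ω) (fun ω => t ω • b ω)
      = crossMoment μ (fun ω => (s ω * t ω) • a ω) b := by
  ext i j
  simp only [crossMoment, of_apply, Pi.smul_apply, smul_eq_mul]
  congr 1
  ext ω
  ring

lemma crossMoment_smul_left_of_indepFun {s : Ω → ℝ} {a : Ω → Fin d → ℝ} {b : Ω → Fin e → ℝ}
    (hind : IndepFun s (fun ω => (a ω, b ω)) μ) (hs : AEStronglyMeasurable s μ)
    (ha : AEStronglyMeasurable a μ) (hb : AEStronglyMeasurable b μ) :
    crossMoment μ (fun ω => s ω • a ω) b = (∫ ω, s ω ∂μ) • crossMoment μ a b := by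
  ext i j
  have hind_ij : IndepFun s (fun ω => a ω i * b ω j) μ :=
    hind.comp (φ := id) (ψ := fun p : (Fin d → ℝ) × (Fin e → ℝ) => p.1 i * p.2 j)
      measurable_id (by fun_prop)
  simp only [crossMoment, of_apply, Matrix.smul_apply, Pi.smul_apply, smul_eq_mul, mul_assoc]
  exact hind_ij.integral_fun_mul_eq_mul_integral hs
    ((continuous_apply i).comp_aestronglyMeasurable ha |>.mul
      ((continuous_apply j).comp_aestronglyMeasurable hb))

lemma crossMoment_add_add_self {a b c : Ω → Fin d → ℝ} (ha : MemLp a 2 μ)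
    (hb : MemLp b 2 μ) (hc : MemLp c 2 μ) (hba : crossMoment μ b a = 0)
    (hca : crossMoment μ c a = 0) (hcb : crossMoment μ c b = 0) :
    crossMoment μ (fun ω => a ω + b ω + c ω) (fun ω => a ω + b ω + c ω)
      = crossMoment μ a a + crossMoment μ b b + crossMoment μ c c := by
  have hab : MemLp (fun ω => a ω + b ω) 2 μ := ha.add hb
  have habc : MemLp (fun ω => a ω + b ω + c ω) 2 μ := hab.add hc
  rw [crossMoment_add_left hab hc habc, crossMoment_add_left ha hb habc,
    crossMoment_add_right ha hab hc, crossMoment_add_right ha ha hb,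
    crossMoment_add_right hb hab hc, crossMoment_add_right hb ha hb,
    crossMoment_add_right hc hab hc, crossMoment_add_right hc ha hb,
    ← transpose_crossMoment b a, ← transpose_crossMoment c a, ← transpose_crossMoment c b,
    hba, hca, hcb]
  simp

end CrossMoment

lemma ProbabilityTheory.IndepFun.memLp_two_smul {Ω E : Type*} [MeasurableSpace Ω]
    {μ : Measure Ω} [NormedAddCommGroup E] [NormedSpace ℝ E] [MeasurableSpace E] [BorelSpace E]
    {s : Ω → ℝ} {a : Ω → E} (hind : IndepFun s a μ) (hs : MemLp s 2 μ) (ha : MemLp a 2 μ) :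
    MemLp (fun ω => s ω • a ω) 2 μ := by
  refine (memLp_two_iff_integrable_sq_norm (hs.1.smul ha.1)).2 ?_
  have hsq : IndepFun (fun ω => s ω ^ 2) (fun ω => ‖a ω‖ ^ 2) μ :=
    hind.comp (φ := fun r : ℝ => r ^ 2) (ψ := fun v : E => ‖v‖ ^ 2) (by fun_prop) (by fun_prop)
  simpa [norm_smul, mul_pow, Pi.mul_def] using hsq.integrable_mul
    ((memLp_two_iff_integrable_sq hs.1).1 hs) ((memLp_two_iff_integrable_sq_norm ha.1).1 ha)

section MultiplicativeNoise

variable {Ω 𝓨 ι : Type*} [MeasurableSpace Ω] [MeasurableSpace 𝓨] {μ : Measure Ω}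
  {d e : ℕ} {σ : ι → Ω → ℝ} {Y : Ω → 𝓨} {φ : ι → 𝓨 → Fin d → ℝ}

lemma memLp_smul_of_indepFun (hind : IndepFun (fun ω k => σ k ω) Y μ)
    (hφ : ∀ k, Measurable (φ k)) (hσ : ∀ k, MemLp (σ k) 2 μ)
    (hφY : ∀ k, MemLp (fun ω => φ k (Y ω)) 2 μ) (k : ι) :
    MemLp (fun ω => σ k ω • φ k (Y ω)) 2 μ :=
  (hind.comp (measurable_pi_apply k) (hφ k)).memLp_two_smul (hσ k) (hφY k)

variable [Fintype ι]

lemma crossMoment_sum_smul_left_eq_zero {ψ : 𝓨 → Fin e → ℝ}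
    (hind : IndepFun (fun ω k => σ k ω) Y μ) (hφ : ∀ k, Measurable (φ k)) (hψ : Measurable ψ)
    (hσ : ∀ k, MemLp (σ k) 2 μ) (hφY : ∀ k, MemLp (fun ω => φ k (Y ω)) 2 μ)
    (hψY : MemLp (fun ω => ψ (Y ω)) 2 μ) (hmean : ∀ k, ∫ ω, σ k ω ∂μ = 0) :
    crossMoment μ (fun ω => ∑ k, σ k ω • φ k (Y ω)) (fun ω => ψ (Y ω)) = 0 := by
  rw [crossMoment_sum_left _ (fun k _ => memLp_smul_of_indepFun hind hφ hσ hφY k) hψY]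
  refine Finset.sum_eq_zero fun k _ => ?_
  have hindk : IndepFun (σ k) (fun ω => (φ k (Y ω), ψ (Y ω))) μ :=
    hind.comp (measurable_pi_apply k) ((hφ k).prodMk hψ)
  rw [crossMoment_smul_left_of_indepFun hindk (hσ k).1 (hφY k).1 hψY.1, hmean k, zero_smul]

lemma crossMoment_sum_smul_sum_smul [DecidableEq ι] (hind : IndepFun (fun ω k => σ k ω) Y μ)
    (hφ : ∀ k, Measurable (φ k)) (hσ : ∀ k, MemLp (σ k) 2 μ)
    (hφY : ∀ k, MemLp (fun ω => φ k (Y ω)) 2 μ)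
    (hcov : ∀ k l, ∫ ω, σ k ω * σ l ω ∂μ = if k = l then 1 else 0) :
    crossMoment μ (fun ω => ∑ k, σ k ω • φ k (Y ω)) (fun ω => ∑ k, σ k ω • φ k (Y ω))
      = ∑ k, crossMoment μ (fun ω => φ k (Y ω)) (fun ω => φ k (Y ω)) := by
  have hterm := memLp_smul_of_indepFun hind hφ hσ hφY
  have hpair : ∀ k l, crossMoment μ (fun ω => σ k ω • φ k (Y ω)) (fun ω => σ l ω • φ l (Y ω))
        = (if k = l then 1 else 0 : ℝ) •
          crossMoment μ (fun ω => φ k (Y ω)) (fun ω => φ l (Y ω)) := by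
    intro k l
    have hindkl : IndepFun (fun ω => σ k ω * σ l ω) (fun ω => (φ k (Y ω), φ l (Y ω))) μ :=
      hind.comp (φ := fun v : ι → ℝ => v k * v l) (by fun_prop) ((hφ k).prodMk (hφ l))
    rw [crossMoment_smul_smul, crossMoment_smul_left_of_indepFun hindkl
      ((hσ k).1.mul (hσ l).1) (hφY k).1 (hφY l).1, hcov]
  rw [crossMoment_sum_left _ (fun k _ => hterm k) (memLp_finsetSum _ fun k _ => hterm k)]
  refine Finset.sum_congr rfl fun k _ => ?_
  rw [crossMoment_sum_right _ (hterm k) fun l _ => hterm l]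
  simp [hpair]

end MultiplicativeNoise

section Feedback

variable {Ω : Type*} [MeasurableSpace Ω] {μ : Measure Ω} {n m : ℕ}

lemma memLp_of_eq_mulVec_add {d : ℕ} {C : Matrix (Fin m) (Fin d) ℝ} {x : Ω → Fin d → ℝ}
    {u v : Ω → Fin m → ℝ} (hu : ∀ ω, u ω = C *ᵥ x ω + v ω) (hx : MemLp x 2 μ)
    (hv : MemLp v 2 μ) : MemLp u 2 μ :=
  funext hu ▸ (hx.matrix_mulVec C).add hv

lemma crossMoment_finAppend_feedback {X : Matrix (Fin n) (Fin n) ℝ}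
    {R : Matrix (Fin n) (Fin m) ℝ} {U : Matrix (Fin m) (Fin m) ℝ} (hX : IsUnit X.det)
    {x : Ω → Fin n → ℝ} {u v : Ω → Fin m → ℝ} (hx : MemLp x 2 μ) (hv : MemLp v 2 μ)
    (hu : ∀ ω, u ω = (Rᵀ * X⁻¹) *ᵥ x ω + v ω) (hxx : crossMoment μ x x = X)
    (hvx : crossMoment μ v x = 0) (hvv : crossMoment μ v v = U - Rᵀ * X⁻¹ * R) :
    crossMoment μ (fun ω => Fin.append (x ω) (u ω)) (fun ω => Fin.append (x ω) (u ω))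
      = vcat (hcat X R) (hcat Rᵀ U) := by
  set K := Rᵀ * X⁻¹
  have hue : u = fun ω => K *ᵥ x ω + v ω := funext hu
  have hKx : MemLp (fun ω => K *ᵥ x ω) 2 μ := hx.matrix_mulVec K
  have hu2 : MemLp u 2 μ := memLp_of_eq_mulVec_add hu hx hv
  have hxv : crossMoment μ x v = 0 := by rw [← transpose_crossMoment, hvx, transpose_zero]
  have hKT : Kᵀ = X⁻¹ * R := by
    have hXT : Xᵀ = X := by rw [← hxx, transpose_crossMoment]
    rw [transpose_mul, transpose_nonsing_inv, hXT, transpose_transpose]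
  have hxu : crossMoment μ x u = R := by
    rw [hue, crossMoment_add_right hx hKx hv, crossMoment_mulVec_right K hx hx, hxx, hxv, hKT,
      add_zero, ← Matrix.mul_assoc, mul_nonsing_inv X hX, Matrix.one_mul]
  have hvu : crossMoment μ v u = U - Rᵀ * X⁻¹ * R := by
    rw [hue, crossMoment_add_right hv hKx hv, crossMoment_mulVec_right K hv hx, hvx, hvv,
      Matrix.zero_mul, zero_add]
  have huu : crossMoment μ u u = U := by
    calc crossMoment μ u u = crossMoment μ (fun ω => K *ᵥ x ω + v ω) u := by rw [← hue]
      _ = K * R + (U - Rᵀ * X⁻¹ * R) := by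
        rw [crossMoment_add_left hKx hv hu2, crossMoment_mulVec_left K hx hu2, hxu, hvu]
      _ = U := by rw [Matrix.mul_assoc]; abel
  rw [crossMoment_finAppend_left, crossMoment_finAppend_right, crossMoment_finAppend_right,
    ← transpose_crossMoment x u, hxx, hxu, huu]

end Feedback

section NextState

variable {Ω ι : Type*} [MeasurableSpace Ω] {μ : Measure Ω} [Fintype ι] {n m : ℕ}
  {A : Matrix (Fin n) (Fin n) ℝ} {Ai : ι → Matrix (Fin n) (Fin n) ℝ}
  {B : Matrix (Fin n) (Fin m) ℝ}
  {x x' w : Ω → Fin n → ℝ} {u : Ω → Fin m → ℝ} {σ : ι → Ω → ℝ}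

lemma memLp_of_eq_mulVec_add_sum_smul
    (hx' : ∀ ω, x' ω = (A + ∑ k, σ k ω • Ai k) *ᵥ x ω + B *ᵥ u ω + w ω)
    (hx : MemLp x 2 μ) (hu : MemLp u 2 μ) (hw : MemLp w 2 μ) (hσ : ∀ k, MemLp (σ k) 2 μ)
    (hind : IndepFun (fun ω k => σ k ω) (fun ω => (x ω, u ω, w ω)) μ) :
    MemLp x' 2 μ := by
  rw [funext fun ω => (hx' ω).trans (mulVec_add_sum_smul_eq ..)]
  have hnoise := memLp_smul_of_indepFun (φ := fun k p => Ai k *ᵥ p.1) hind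
    (fun k => by fun_prop) hσ (fun k => hx.matrix_mulVec (Ai k))
  exact (((hx.finAppend hu).matrix_mulVec _).add (memLp_finsetSum _ fun k _ => hnoise k)).add hw

lemma crossMoment_of_eq_mulVec_add_sum_smul [DecidableEq ι]
    (hx' : ∀ ω, x' ω = (A + ∑ k, σ k ω • Ai k) *ᵥ x ω + B *ᵥ u ω + w ω)
    (hx : MemLp x 2 μ) (hu : MemLp u 2 μ) (hw : MemLp w 2 μ) (hσ : ∀ k, MemLp (σ k) 2 μ)
    (hind : IndepFun (fun ω k => σ k ω) (fun ω => (x ω, u ω, w ω)) μ)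
    (hmean : ∀ k, ∫ ω, σ k ω ∂μ = 0)
    (hcov : ∀ k l, ∫ ω, σ k ω * σ l ω ∂μ = if k = l then 1 else 0)
    (hwx : crossMoment μ w x = 0) (hwu : crossMoment μ w u = 0) (hww : crossMoment μ w w = 1) :
    crossMoment μ x' x'
      = hcat A B * crossMoment μ (fun ω => Fin.append (x ω) (u ω))
          (fun ω => Fin.append (x ω) (u ω)) * (hcat A B)ᵀ
        + ∑ k, Ai k * crossMoment μ x x * (Ai k)ᵀ + 1 := by
  have hz := hx.finAppend hu
  have hφ : ∀ k, Measurable fun p : (Fin n → ℝ) × (Fin m → ℝ) × (Fin n → ℝ) => Ai k *ᵥ p.1 :=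
    fun k => by fun_prop
  have hφY : ∀ k, MemLp (fun ω => Ai k *ᵥ x ω) 2 μ := fun k => hx.matrix_mulVec (Ai k)
  have hAz := hz.matrix_mulVec (hcat A B)
  have hnoise : MemLp (fun ω => ∑ k, σ k ω • (Ai k *ᵥ x ω)) 2 μ :=
    memLp_finsetSum _ fun k _ =>
      memLp_smul_of_indepFun (φ := fun k p => Ai k *ᵥ p.1) hind hφ hσ hφY k
  have hnoise_Az : crossMoment μ (fun ω => ∑ k, σ k ω • (Ai k *ᵥ x ω))
      (fun ω => hcat A B *ᵥ Fin.append (x ω) (u ω)) = 0 :=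
    crossMoment_sum_smul_left_eq_zero (Y := fun ω => (x ω, u ω, w ω))
      (φ := fun k p => Ai k *ᵥ p.1) (ψ := fun p => hcat A B *ᵥ Fin.append p.1 p.2.1)
      hind hφ (by fun_prop) hσ hφY hAz hmean
  have hnoise_w : crossMoment μ (fun ω => ∑ k, σ k ω • (Ai k *ᵥ x ω)) w = 0 :=
    crossMoment_sum_smul_left_eq_zero (Y := fun ω => (x ω, u ω, w ω))
      (φ := fun k p => Ai k *ᵥ p.1) (ψ := fun p => p.2.2) hind hφ (by fun_prop) hσ hφY hw hmean
  have hw_Az : crossMoment μ w (fun ω => hcat A B *ᵥ Fin.append (x ω) (u ω)) = 0 := by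
    rw [crossMoment_mulVec_right _ hw hz, crossMoment_finAppend_right, hwx, hwu, hcat_zero_zero,
      Matrix.zero_mul]
  have hw_noise : crossMoment μ w (fun ω => ∑ k, σ k ω • (Ai k *ᵥ x ω)) = 0 := by
    rw [← transpose_crossMoment, hnoise_w, transpose_zero]
  rw [funext fun ω => (hx' ω).trans (mulVec_add_sum_smul_eq ..),
    crossMoment_add_add_self hAz hnoise hw hnoise_Az hw_Az hw_noise,
    crossMoment_sum_smul_sum_smul (Y := fun ω => (x ω, u ω, w ω)) (φ := fun k p => Ai k *ᵥ p.1)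
      hind hφ hσ hφY hcov,
    crossMoment_mulVec_left _ hz hAz, crossMoment_mulVec_right _ hz hz, hww, Matrix.mul_assoc]
  congr 2
  refine Finset.sum_congr rfl fun k _ => ?_
  rw [crossMoment_mulVec_left _ hx (hφY k), crossMoment_mulVec_right _ hx hx, Matrix.mul_assoc]

end NextState

theorem controller_realizes_covariance_sequence_general
    {Ω : Type*} [MeasurableSpace Ω] (μ : Measure Ω)
    {n m M N : ℕ}
    (A : Matrix (Fin n) (Fin n) ℝ) (Ai : Fin M → Matrix (Fin n) (Fin n) ℝ)
    (B : Matrix (Fin n) (Fin m) ℝ)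
    (X : ℕ → Matrix (Fin n) (Fin n) ℝ) (R : ℕ → Matrix (Fin n) (Fin m) ℝ)
    (U : ℕ → Matrix (Fin m) (Fin m) ℝ)
    (hXinv : ∀ k ≤ N, IsUnit (X k).det)
    (hXrec : ∀ k < N, X (k + 1) =
      hcat A B * vcat (hcat (X k) (R k)) (hcat (R k)ᵀ (U k)) * (hcat A B)ᵀ
        + ∑ i, Ai i * X k * (Ai i)ᵀ + 1)
    (x : ℕ → Ω → Fin n → ℝ) (u v : ℕ → Ω → Fin m → ℝ)
    (w : ℕ → Ω → Fin n → ℝ) (σ : ℕ → Fin M → Ω → ℝ)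
    (hx0mom : MemLp (x 0) 2 μ)
    (hx0 : crossMoment μ (x 0) (x 0) = X 0)
    (hu : ∀ k ≤ N, ∀ ω, u k ω = ((R k)ᵀ * (X k)⁻¹).mulVec (x k ω) + v k ω)
    (hxrec : ∀ k < N, ∀ ω, x (k + 1) ω =
      (A + ∑ i, σ k i ω • Ai i).mulVec (x k ω) + B.mulVec (u k ω) + w k ω)
    (hvmom : ∀ k ≤ N, MemLp (v k) 2 μ)
    (hvx : ∀ k ≤ N, crossMoment μ (v k) (x k) = 0)
    (hvv : ∀ k ≤ N, crossMoment μ (v k) (v k) = U k - (R k)ᵀ * (X k)⁻¹ * R k)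
    (hwmom : ∀ k < N, MemLp (w k) 2 μ)
    (hwx : ∀ k < N, crossMoment μ (w k) (x k) = 0)
    (hwu : ∀ k < N, crossMoment μ (w k) (u k) = 0)
    (hww : ∀ k < N, crossMoment μ (w k) (w k) = 1)
    (hσmom : ∀ k < N, ∀ i, MemLp (σ k i) 2 μ)
    (hσindep : ∀ k < N, ProbabilityTheory.IndepFun (fun ω i => σ k i ω)
      (fun ω => (x k ω, u k ω, w k ω)) μ)
    (hσmean : ∀ k < N, ∀ i, ∫ ω, σ k i ω ∂μ = 0)
    (hσcov : ∀ k < N, ∀ i j, ∫ ω, σ k i ω * σ k j ω ∂μ = if i = j then (1 : ℝ) else 0) :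
    ∀ k ≤ N, crossMoment μ (fun ω => Fin.append (x k ω) (u k ω))
        (fun ω => Fin.append (x k ω) (u k ω))
      = vcat (hcat (X k) (R k)) (hcat (R k)ᵀ (U k)) := by
  have hstate : ∀ k ≤ N, MemLp (x k) 2 μ ∧ crossMoment μ (x k) (x k) = X k := by
    intro k hk
    induction k with
    | zero => exact ⟨hx0mom, hx0⟩
    | succ k ih =>
      have hkN : k < N := hk
      obtain ⟨hx, hxx⟩ := ih hkN.le
      have hu2 : MemLp (u k) 2 μ := memLp_of_eq_mulVec_add (hu k hkN.le) hx (hvmom k hkN.le)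
      refine ⟨memLp_of_eq_mulVec_add_sum_smul (hxrec k hkN) hx hu2 (hwmom k hkN) (hσmom k hkN)
        (hσindep k hkN), ?_⟩
      rw [crossMoment_of_eq_mulVec_add_sum_smul (hxrec k hkN) hx hu2 (hwmom k hkN) (hσmom k hkN)
          (hσindep k hkN) (hσmean k hkN) (hσcov k hkN) (hwx k hkN) (hwu k hkN) (hww k hkN),
        crossMoment_finAppend_feedback (hXinv k hkN.le) hx (hvmom k hkN.le) (hu k hkN.le) hxx
          (hvx k hkN.le) (hvv k hkN.le), hxx, hXrec k hkN]
  intro k hk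
  obtain ⟨hx, hxx⟩ := hstate k hk
  exact crossMoment_finAppend_feedback (hXinv k hk) hx (hvmom k hk) (hu k hk) hxx (hvx k hk)
    (hvv k hk)

theorem controller_realizes_covariance_sequence
    {Ω : Type*} [MeasurableSpace Ω] (μ : Measure Ω) [IsProbabilityMeasure μ]
    {n m M N : ℕ}
    (A : Matrix (Fin n) (Fin n) ℝ) (Ai : Fin M → Matrix (Fin n) (Fin n) ℝ)
    (B : Matrix (Fin n) (Fin m) ℝ)
    (X : ℕ → Matrix (Fin n) (Fin n) ℝ) (R : ℕ → Matrix (Fin n) (Fin m) ℝ)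
    (U : ℕ → Matrix (Fin m) (Fin m) ℝ)
    (hVpsd : ∀ k ≤ N, (vcat (hcat (X k) (R k)) (hcat (R k)ᵀ (U k))).PosSemidef)
    (hXinv : ∀ k ≤ N, IsUnit (X k).det)
    (hXrec : ∀ k < N, X (k + 1) =
      hcat A B * vcat (hcat (X k) (R k)) (hcat (R k)ᵀ (U k)) * (hcat A B)ᵀ
        + ∑ i, Ai i * X k * (Ai i)ᵀ + 1)
    (x : ℕ → Ω → Fin n → ℝ) (u v : ℕ → Ω → Fin m → ℝ)
    (w : ℕ → Ω → Fin n → ℝ) (σ : ℕ → Fin M → Ω → ℝ)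
    (hx0mom : MemLp (x 0) 2 μ)
    (hx0 : crossMoment μ (x 0) (x 0) = X 0)
    (hu : ∀ k ≤ N, ∀ ω, u k ω = ((R k)ᵀ * (X k)⁻¹).mulVec (x k ω) + v k ω)
    (hxrec : ∀ k < N, ∀ ω, x (k + 1) ω =
      (A + ∑ i, σ k i ω • Ai i).mulVec (x k ω) + B.mulVec (u k ω) + w k ω)
    (hvmom : ∀ k ≤ N, MemLp (v k) 2 μ)
    (hvmean : ∀ k ≤ N, ∫ ω, v k ω ∂μ = 0)
    (hvx : ∀ k ≤ N, crossMoment μ (v k) (x k) = 0)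
    (hvv : ∀ k ≤ N, crossMoment μ (v k) (v k) = U k - (R k)ᵀ * (X k)⁻¹ * R k)
    (hwmom : ∀ k < N, MemLp (w k) 2 μ)
    (hwx : ∀ k < N, crossMoment μ (w k) (x k) = 0)
    (hwu : ∀ k < N, crossMoment μ (w k) (u k) = 0)
    (hww : ∀ k < N, crossMoment μ (w k) (w k) = 1)
    (hσmom : ∀ k < N, ∀ i, MemLp (σ k i) 2 μ)
    (hσindep : ∀ k < N, ProbabilityTheory.IndepFun (fun ω i => σ k i ω)
      (fun ω => (x k ω, u k ω, w k ω)) μ)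
    (hσmean : ∀ k < N, ∀ i, ∫ ω, σ k i ω ∂μ = 0)
    (hσcov : ∀ k < N, ∀ i j, ∫ ω, σ k i ω * σ k j ω ∂μ = if i = j then (1 : ℝ) else 0) :
    ∀ k ≤ N, crossMoment μ (fun ω => Fin.append (x k ω) (u k ω))
        (fun ω => Fin.append (x k ω) (u k ω))
      = vcat (hcat (X k) (R k)) (hcat (R k)ᵀ (U k)) :=
  controller_realizes_covariance_sequence_general μ A Ai B X R U hXinv hXrec x u v w σ hx0mom hx0 hu
    hxrec hvmom hvx hvv hwmom hwx hwu hww hσmom hσindep hσmean hσcov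
end
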